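/- A locally optimal solution 2-approximately serves all clients outside expensive clusters: let ε ∈ (0, 1/12], n := |D| ≥ 3, and 1 ≤ k ≤ |F|. Let OPT, S ⊆ F with |OPT| = |S| = k, with assignments σ_OPT for OPT and σ_S for S; write opt := cost(OPT) > 0, suppose cost(S) ≤ 5·opt and that S is locally optimal under single swaps (cost((S−{c})∪{c'}) ≥ cost(S) for all c ∈ S, c' ∈ F). Call C*_o := σ_OPT⁻¹(o) pure if there is c ∈ S with |σ_S⁻¹(c) Δ C*_o| ≤ 3ε·min(|C*_o|, |σ_S⁻¹(c)|); for each pure o fix such a center t(o) ∈ S, and for each non-pure o let t(o) ∈ S satisfy d(o,t(o)) = d(o,S). Assume the number of non-pure clusters is at most (ln n)/ε³. For each non-pure o with C*_o ≠ ∅ fix an ε-quantile radius a_o with leaders L_o and average γ_o; call a non-pure o basic-cheap if Σ_{p∈L_o} d(p,S) ≤ ε⁵·opt/ln n or d(o,S) ≤ (1+ε)·a_o + ε·γ_o; let V be a set of non-pure, non-basic-cheap centers with Σ_{o∈V} Σ_{p∈C*_o} d(p,S) ≤ ε²·opt; call o expensive if o is non-pure, non-basic-cheap and o ∉ V. Then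 Σ_{p : σ_OPT(p) not expensive} d(p, t(σ_OPT(p))) ≤ 2·Σ_{p : σ_OPT(p) not expensive} d(p, OPT) + 68·ε·opt. -/

import Mathlib

/-!
Each non-expensive `OPT`-cluster `C_o` is charged separately, against `t = t(o)`.
If `o` is pure, most of `C_o` is served by `t` in `S`, so `t` is close to `o`; swapping `t`
for `o` and local optimality then bound the `S`-cost of `C_o` by its `OPT`-cost plus `O(ε)`
times its total cost; as `d(p,t) = d(p,S)` on the `S`-cluster of `t` and
`d(p,t) ≤ d(p,o) + d(o,t)` off it, this gives the factor `2`.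
If `o` is non-pure, `t` is nearest to `o`, so `d(p,t) ≤ d(p,o) + d(o,S)`: the excess
`|C_o|·d(o,S)` is paid by the `S`-cost of `C_o` when `o ∈ V`, and otherwise by
basic-cheapness together with `(1 - ε)|C_o|·a_o ≤ Σ_{C_o} d(p,o)`.
Summed over `OPT` the slack is `4ε(cost OPT + cost S) + ε²·opt + ε·opt ≤ 26ε·opt`.
-/

open Finset

/-- `d(p,S)`: distance from `p` to the closest point of `S` (junk `0` if `S = ∅`). -/
noncomputable def dS {X : Type*} [MetricSpace X] (p : X) (S : Finset X) : ℝ :=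
  if h : S.Nonempty then S.inf' h (fun c => dist p c) else 0

noncomputable def kmCost {X : Type*} [MetricSpace X] (D S : Finset X) : ℝ :=
  ∑ p ∈ D, dS p S

def cluster {X : Type*} [DecidableEq X] (D : Finset X) (σ : X → X) (o : X) : Finset X :=
  D.filter (fun p => σ p = o)

def IsPure {X : Type*} [DecidableEq X] (D S : Finset X) (σS σO : X → X) (ε : ℝ)
    (o : X) : Prop :=
  ∃ c ∈ S, ((symmDiff (cluster D σS c) (cluster D σO o)).card : ℝ)
    ≤ 3 * ε * min ((cluster D σO o).card : ℝ) ((cluster D σS c).card : ℝ)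

/-- A (non-pure) cluster with center `o` is basic-cheap if its leaders are cheap in `S`
or its center is covered by `S`. -/
noncomputable def BasicCheap {X : Type*} [MetricSpace X] [DecidableEq X]
    (D S : Finset X) (σO : X → X) (a : X → ℝ) (opt ε : ℝ) (o : X) : Prop :=
  (∑ p ∈ (cluster D σO o).filter (fun p => dist p o ≤ a o), dS p S
      ≤ ε ^ 5 * opt / Real.log D.card) ∨
  dS o S ≤ (1 + ε) * a o
    + ε * ((1 / ((cluster D σO o).card : ℝ))
        * ∑ p ∈ cluster D σO o, (dist p o + dS p S))

section Metric

variable {X : Type*} [MetricSpace X]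

lemma dS_nonneg (p : X) (S : Finset X) : 0 ≤ dS p S := by
  unfold dS
  split
  · exact le_inf' _ _ fun _ _ => dist_nonneg
  · exact le_rfl

lemma dS_le_dist {p c : X} {S : Finset X} (hc : c ∈ S) : dS p S ≤ dist p c := by
  rw [dS, dif_pos ⟨c, hc⟩]
  exact inf'_le _ hc

lemma dS_le_dist_add_dS (o q : X) (S : Finset X) : dS o S ≤ dist o q + dS q S := by
  by_cases hS : S.Nonempty
  · obtain ⟨c, hc, hqc⟩ := exists_mem_eq_inf' hS (fun c => dist q c)
    calc dS o S ≤ dist o c := dS_le_dist hc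
      _ ≤ dist o q + dist q c := dist_triangle o q c
      _ = dist o q + dS q S := by rw [dS, dif_pos hS, hqc]
  · rw [dS, dif_neg hS]
    exact add_nonneg dist_nonneg (dS_nonneg q S)

lemma kmCost_nonneg (D S : Finset X) : 0 ≤ kmCost D S :=
  sum_nonneg fun p _ => dS_nonneg p S

lemma card_mul_dS_le_sum (C S : Finset X) (o : X) :
    #C * dS o S ≤ ∑ p ∈ C, (dist p o + dS p S) := by
  rw [← nsmul_eq_mul, ← sum_const]
  exact sum_le_sum fun p _ => by rw [dist_comm]; exact dS_le_dist_add_dS o p S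

lemma sum_dist_le_of_dist_eq_dS (C S : Finset X) {o c : X} (hc : dist o c = dS o S) :
    ∑ p ∈ C, dist p c ≤ ∑ p ∈ C, dist p o + #C * dS o S :=
  calc ∑ p ∈ C, dist p c ≤ ∑ p ∈ C, (dist p o + dist o c) :=
        sum_le_sum fun p _ => dist_triangle p o c
    _ = ∑ p ∈ C, dist p o + #C * dS o S := by rw [sum_add_distrib, sum_const, nsmul_eq_mul, hc]

lemma mul_card_mul_le_sum_dist (C : Finset X) (o : X) {r ε : ℝ} (hr : 0 ≤ r)
    (hfar : (1 - ε) * #C ≤ #(C.filter fun p => r ≤ dist p o)) :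
    (1 - ε) * #C * r ≤ ∑ p ∈ C, dist p o :=
  calc (1 - ε) * #C * r ≤ #(C.filter fun p => r ≤ dist p o) * r :=
        mul_le_mul_of_nonneg_right hfar hr
    _ ≤ ∑ p ∈ C.filter (fun p => r ≤ dist p o), dist p o := by
        rw [← nsmul_eq_mul]
        exact card_nsmul_le_sum _ _ _ fun p hp => (mem_filter.1 hp).2
    _ ≤ ∑ p ∈ C, dist p o :=
        sum_le_sum_of_subset_of_nonneg (filter_subset _ _) fun _ _ _ => dist_nonneg

lemma mul_dS_le_of_cheap_leaders {L S : Finset X} {o : X} {r ε m b : ℝ}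
    (hL : ∀ q ∈ L, dist q o ≤ r) (hε : 0 < ε) (hm : 0 < m) (hb : 0 ≤ b)
    (hLcard : ε * m ≤ #L) (hLcost : ∑ q ∈ L, dS q S ≤ ε * b) :
    m * dS o S ≤ m * r + b := by
  have hLpos : (0 : ℝ) < #L := (mul_pos hε hm).trans_le hLcard
  have hleaders : #L * dS o S ≤ #L * r + ∑ q ∈ L, dS q S :=
    calc #L * dS o S ≤ ∑ q ∈ L, (dist q o + dS q S) := card_mul_dS_le_sum L S o
      _ ≤ ∑ q ∈ L, (r + dS q S) := sum_le_sum fun q hq => by linarith [hL q hq]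
      _ = #L * r + ∑ q ∈ L, dS q S := by rw [sum_add_distrib, sum_const, nsmul_eq_mul]
  refine le_of_mul_le_mul_left ?_ hLpos
  nlinarith [mul_le_mul_of_nonneg_left hleaders hm.le, mul_le_mul_of_nonneg_left hLcost hm.le,
    mul_le_mul_of_nonneg_right hLcard hb]

end Metric

section Assignment

variable {X : Type*} [MetricSpace X] [DecidableEq X]

def IsAssignment (D S : Finset X) (σ : X → X) : Prop :=
  ∀ p ∈ D, σ p ∈ S ∧ dist p (σ p) = dS p S

variable {D S : Finset X} {σ : X → X}

lemma dist_eq_dS_of_mem_cluster (hσ : IsAssignment D S σ) {p c : X} (hp : p ∈ cluster D σ c) :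
    dist p c = dS p S := by
  obtain ⟨hpD, rfl⟩ := mem_filter.1 hp
  exact (hσ p hpD).2

lemma sum_cluster_dS_eq {O : Finset X} (hσ : IsAssignment D O σ) (o : X) :
    ∑ p ∈ cluster D σ o, dS p O = ∑ p ∈ cluster D σ o, dist p o :=
  sum_congr rfl fun _ hp => (dist_eq_dS_of_mem_cluster hσ hp).symm

lemma dS_insert_erase_le (hσ : IsAssignment D S σ) {p : X} (hp : p ∈ D) (o c : X) :
    dS p (insert o (S.erase c)) ≤ dS p S + if σ p = c then dist o c else 0 := by
  split_ifs with h
  · calc dS p (insert o (S.erase c)) ≤ dist p o := dS_le_dist (mem_insert_self o _)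
      _ ≤ dist p c + dist c o := dist_triangle p c o
      _ = dS p S + dist o c := by rw [← h, (hσ p hp).2, dist_comm]
  · rw [add_zero, ← (hσ p hp).2]
    exact dS_le_dist (mem_insert_of_mem (mem_erase.2 ⟨h, (hσ p hp).1⟩))

/-- Swapping the center `c` of `S` for `o` reroutes `C` to `o` and the rest of `c`'s cluster
through `o` at extra cost `dist o c` each, so local optimality bounds the cost of `C` in `S`. -/
lemma sum_dS_le_of_swap (hσ : IsAssignment D S σ) {C : Finset X} (hC : C ⊆ D) {o c : X}
    (hlocal : kmCost D S ≤ kmCost D (insert o (S.erase c))) :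
    ∑ p ∈ C, dS p S ≤ ∑ p ∈ C, dist p o + #(cluster D σ c \ C) * dist o c := by
  set S' := insert o (S.erase c)
  have hrest : ∑ p ∈ D \ C, dS p S' ≤ ∑ p ∈ D \ C, dS p S + #(cluster D σ c \ C) * dist o c :=
    calc ∑ p ∈ D \ C, dS p S' ≤ ∑ p ∈ D \ C, (dS p S + if σ p = c then dist o c else 0) :=
          sum_le_sum fun p hp => dS_insert_erase_le hσ (sdiff_subset hp) o c
      _ = ∑ p ∈ D \ C, dS p S + #(cluster D σ c \ C) * dist o c := by
          have hfilter : (D \ C).filter (σ · = c) = cluster D σ c \ C := by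
            ext p
            simp only [cluster, mem_filter, mem_sdiff]
            tauto
          rw [sum_add_distrib, ← sum_filter, hfilter, sum_const, nsmul_eq_mul]
  have hC' : ∑ p ∈ C, dS p S' ≤ ∑ p ∈ C, dist p o :=
    sum_le_sum fun p _ => dS_le_dist (mem_insert_self o _)
  have hS := sum_sdiff hC (f := fun p => dS p S)
  have hS' := sum_sdiff hC (f := fun p => dS p S')
  unfold kmCost at hlocal
  linarith

lemma card_inter_mul_dist_le (hσ : IsAssignment D S σ) (C : Finset X) (o c : X) :
    #(C ∩ cluster D σ c) * dist o c ≤ ∑ p ∈ C, (dist p o + dS p S) :=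
  calc #(C ∩ cluster D σ c) * dist o c
      ≤ ∑ q ∈ C ∩ cluster D σ c, (dist q o + dS q S) := by
        rw [← nsmul_eq_mul, ← sum_const]
        refine sum_le_sum fun q hq => ?_
        rw [dist_comm q o, ← dist_eq_dS_of_mem_cluster hσ (mem_inter.1 hq).2]
        exact dist_triangle o q c
    _ ≤ ∑ p ∈ C, (dist p o + dS p S) :=
        sum_le_sum_of_subset_of_nonneg inter_subset_left fun p _ _ =>
          add_nonneg dist_nonneg (dS_nonneg p S)

lemma sum_dist_le_add_card_sdiff_mul (hσ : IsAssignment D S σ) (C : Finset X) (o c : X) :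
    ∑ p ∈ C, dist p c ≤ ∑ p ∈ C, (dist p o + dS p S) + #(C \ cluster D σ c) * dist o c := by
  set T := cluster D σ c
  calc ∑ p ∈ C, dist p c = ∑ p ∈ C ∩ T, dist p c + ∑ p ∈ C \ T, dist p c :=
        (sum_inter_add_sum_sdiff C T _).symm
    _ ≤ ∑ p ∈ C ∩ T, (dist p o + dS p S) + ∑ p ∈ C \ T, ((dist p o + dS p S) + dist o c) := by
        gcongr with p hp p hp
        · rw [dist_eq_dS_of_mem_cluster hσ (mem_inter.1 hp).2]
          linarith [dist_nonneg (x := p) (y := o)]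
        · linarith [dist_triangle p o c, dS_nonneg p S]
    _ = ∑ p ∈ C, (dist p o + dS p S) + #(C \ T) * dist o c := by
        rw [sum_add_distrib (s := C \ T), sum_const, nsmul_eq_mul, ← add_assoc,
          sum_inter_add_sum_sdiff]

end Assignment

section Clusters

variable {X : Type*} [MetricSpace X] [DecidableEq X]

/-- At least `(1 - 3ε)|C|` points of `C` are served by `c`, so
`(1 - 3ε)|C| · dist o c ≤ Σ_C (dist p o + dS p S)`: the center `c` is close to `o`. -/
lemma sum_dist_le_of_swap_optimal {D S C : Finset X} {σ : X → X} {o c : X} {ε : ℝ}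
    (hσ : IsAssignment D S σ) (hC : C ⊆ D) (hε0 : 0 ≤ ε) (hε1 : ε ≤ 1 / 12)
    (hsymm : (#(symmDiff (cluster D σ c) C) : ℝ) ≤ 3 * ε * #C)
    (hlocal : kmCost D S ≤ kmCost D (insert o (S.erase c))) :
    ∑ p ∈ C, dist p c
      ≤ 2 * ∑ p ∈ C, dist p o + 4 * ε * ∑ p ∈ C, (dist p o + dS p S) := by
  set T := cluster D σ c
  have hclose := card_inter_mul_dist_le hσ C o c
  have hswap := sum_dS_le_of_swap hσ hC hlocal
  have hsplit := sum_dist_le_add_card_sdiff_mul hσ C o c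
  have hsymm_card : (#(T \ C) : ℝ) + #(C \ T) = #(symmDiff T C) := by
    rw [Finset.symmDiff_def, card_union_of_disjoint disjoint_sdiff_sdiff, Nat.cast_add]
  have hC_card : (#(C ∩ T) : ℝ) + #(C \ T) = #C := by exact_mod_cast card_inter_add_card_sdiff C T
  rw [sum_add_distrib] at hclose hsplit ⊢
  have hd := dist_nonneg (x := o) (y := c)
  have hsymm_d := mul_le_mul_of_nonneg_right hsymm hd
  have hmd : #C * dist o c ≤ 4 / 3 * (∑ p ∈ C, dist p o + ∑ p ∈ C, dS p S) := by
    have : (0 : ℝ) ≤ #(T \ C) * dist o c := by positivity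
    nlinarith [mul_nonneg (by linarith : (0 : ℝ) ≤ 1 / 12 - ε)
      (by positivity : (0 : ℝ) ≤ #C * dist o c)]
  nlinarith [mul_le_mul_of_nonneg_left hmd hε0]

lemma card_mul_dS_le_of_basicCheap {D S : Finset X} {σO : X → X} {a : X → ℝ} {opt ε : ℝ}
    {o : X} (hε0 : 0 < ε) (hε1 : ε ≤ 1 / 3) (hopt : 0 ≤ opt)
    (hC : (cluster D σO o).Nonempty) (ha : 0 ≤ a o)
    (hnear : ε * #(cluster D σO o) ≤ #((cluster D σO o).filter fun p => dist p o ≤ a o))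
    (hfar : (1 - ε) * #(cluster D σO o) ≤ #((cluster D σO o).filter fun p => a o ≤ dist p o))
    (hcheap : BasicCheap D S σO a opt ε o) :
    #(cluster D σO o) * dS o S
      ≤ ∑ p ∈ cluster D σO o, dist p o
        + 4 * ε * ∑ p ∈ cluster D σO o, (dist p o + dS p S)
        + ε ^ 4 * opt / Real.log #D := by
  unfold BasicCheap at hcheap
  set C := cluster D σO o
  have hm : (0 : ℝ) < #C := by exact_mod_cast hC.card_pos
  have hquantile := mul_card_mul_le_sum_dist C o ha hfar
  have hb : 0 ≤ ε ^ 4 * opt / Real.log #D := by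
    have := Real.log_natCast_nonneg #D
    positivity
  have hW : ∑ p ∈ C, dist p o ≤ ∑ p ∈ C, (dist p o + dS p S) :=
    sum_le_sum fun p _ => le_add_of_nonneg_right (dS_nonneg p S)
  have hma : (1 + ε) * (#C * a o) ≤ ∑ p ∈ C, dist p o + 3 * ε * ∑ p ∈ C, dist p o := by
    nlinarith [mul_le_mul_of_nonneg_left hquantile (by linarith : (0 : ℝ) ≤ 1 + 3 * ε),
      mul_nonneg (mul_nonneg hε0.le (by linarith : (0 : ℝ) ≤ 1 - 3 * ε)) (mul_nonneg hm.le ha)]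
  have hεW := mul_le_mul_of_nonneg_left hW (by linarith : (0 : ℝ) ≤ 3 * ε)
  have hεa : 0 ≤ ε * (#C * a o) := by positivity
  rcases hcheap with hleaders | hcenter
  · have := mul_dS_le_of_cheap_leaders (fun q hq => (mem_filter.1 hq).2) hε0 hm hb hnear
      (by convert hleaders using 1; ring)
    nlinarith
  · have hcenter' : #C * dS o S ≤ (1 + ε) * (#C * a o) + ε * ∑ p ∈ C, (dist p o + dS p S) := by
      refine (mul_le_mul_of_nonneg_left hcenter hm.le).trans_eq ?_
      field_simp
    nlinarith

end Clusters

section Partition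

variable {X : Type*} [DecidableEq X] {β : Type*} [AddCommMonoid β] {D O : Finset X} {σ : X → X}

lemma sum_sum_cluster_eq_sum (hσ : ∀ p ∈ D, σ p ∈ O) (f : X → X → β) :
    ∑ o ∈ O, ∑ p ∈ cluster D σ o, f p o = ∑ p ∈ D, f p (σ p) := by
  rw [← sum_fiberwise_of_maps_to hσ]
  exact sum_congr rfl fun o _ => sum_congr rfl fun p hp => by rw [(mem_filter.1 hp).2]

lemma sum_filter_eq_sum_sum_cluster (hσ : ∀ p ∈ D, σ p ∈ O) (P : X → Prop) [DecidablePred P]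
    (f : X → X → β) :
    ∑ p ∈ D.filter (fun p => P (σ p)), f p (σ p)
      = ∑ o ∈ O.filter P, ∑ p ∈ cluster D σ o, f p o := by
  rw [← sum_sum_cluster_eq_sum (fun p hp => mem_filter.2 ⟨hσ p (mem_filter.1 hp).1,
    (mem_filter.1 hp).2⟩) f]
  refine sum_congr rfl fun o ho => sum_congr ?_ fun _ _ => rfl
  ext p
  simp only [cluster, mem_filter, and_assoc]
  constructor
  · rintro ⟨hp, -, rfl⟩
    exact ⟨hp, rfl⟩
  · rintro ⟨hp, rfl⟩
    exact ⟨hp, (mem_filter.1 ho).2, rfl⟩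

end Partition

section Error

variable {X : Type*} [MetricSpace X] [DecidableEq X]

open scoped Classical in
/-- The three terms pay for pure and basic-cheap clusters, for clusters in `V`, and for the
cheap-leaders case of basic-cheapness, respectively. -/
noncomputable def clusterError (D S V : Finset X) (σO σS : X → X) (ε opt : ℝ) (o : X) : ℝ :=
  4 * ε * ∑ p ∈ cluster D σO o, (dist p o + dS p S)
    + (if o ∈ V then ∑ p ∈ cluster D σO o, dS p S else 0)
    + (if IsPure D S σS σO ε o then 0 else ε ^ 4 * opt / Real.log #D)

lemma clusterError_nonneg (D S V : Finset X) (σO σS : X → X) {ε opt : ℝ} (hε : 0 ≤ ε)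
    (hopt : 0 ≤ opt) (o : X) : 0 ≤ clusterError D S V σO σS ε opt o := by
  have hW : 0 ≤ ∑ p ∈ cluster D σO o, (dist p o + dS p S) :=
    sum_nonneg fun p _ => add_nonneg dist_nonneg (dS_nonneg p S)
  have hS : 0 ≤ ∑ p ∈ cluster D σO o, dS p S := sum_nonneg fun p _ => dS_nonneg p S
  have hlog := Real.log_natCast_nonneg #D
  unfold clusterError
  split_ifs <;> positivity

open scoped Classical in
lemma sum_clusterError_le {D S V OPT : Finset X} {σO σS : X → X} {ε : ℝ}
    (hσO : IsAssignment D OPT σO) (hε0 : 0 < ε) (hε1 : ε ≤ 1 / 12)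
    (h5 : kmCost D S ≤ 5 * kmCost D OPT) (hVsub : V ⊆ OPT)
    (hVcost : ∑ o ∈ V, ∑ p ∈ cluster D σO o, dS p S ≤ ε ^ 2 * kmCost D OPT)
    (hcount : (#(OPT.filter fun o => ¬ IsPure D S σS σO ε o) : ℝ) ≤ Real.log #D / ε ^ 3) :
    ∑ o ∈ OPT, clusterError D S V σO σS ε (kmCost D OPT) o ≤ 26 * ε * kmCost D OPT := by
  set opt := kmCost D OPT
  have hopt : 0 ≤ opt := kmCost_nonneg D OPT
  have hW : ∑ o ∈ OPT, ∑ p ∈ cluster D σO o, (dist p o + dS p S) = opt + kmCost D S := by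
    rw [sum_sum_cluster_eq_sum (fun p hp => (hσO p hp).1) (fun p o => dist p o + dS p S),
      sum_add_distrib]
    exact congrArg (· + kmCost D S) (sum_congr rfl fun p hp => (hσO p hp).2)
  have hV : ∑ o ∈ OPT, (if o ∈ V then ∑ p ∈ cluster D σO o, dS p S else 0)
      = ∑ o ∈ V, ∑ p ∈ cluster D σO o, dS p S := by
    rw [sum_ite_mem, inter_eq_right.2 hVsub]
  have hnonpure : ∑ o ∈ OPT, (if IsPure D S σS σO ε o then 0 else ε ^ 4 * opt / Real.log #D)
      ≤ ε * opt := by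
    have hlog := Real.log_natCast_nonneg #D
    rw [sum_ite, sum_const_zero, zero_add, sum_const, nsmul_eq_mul]
    calc _ ≤ Real.log #D / ε ^ 3 * (ε ^ 4 * opt / Real.log #D) :=
          mul_le_mul_of_nonneg_right hcount (by positivity)
      _ = ε * opt * (Real.log #D / Real.log #D) := by field_simp
      _ ≤ ε * opt := mul_le_of_le_one_right (by positivity) (div_self_le_one _)
  unfold clusterError
  rw [sum_add_distrib, sum_add_distrib, ← mul_sum, hW, hV]
  nlinarith [mul_le_mul_of_nonneg_left h5 (by linarith : (0 : ℝ) ≤ 4 * ε),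
    mul_le_mul_of_nonneg_right hε1 (mul_nonneg hε0.le hopt)]

end Error

lemma sum_dist_le_two_mul_add_clusterError {X : Type*} [MetricSpace X] [DecidableEq X]
    {D S V : Finset X} {σO σS : X → X} {a : X → ℝ} {ε opt : ℝ} {o c : X}
    (hε0 : 0 < ε) (hε1 : ε ≤ 1 / 12) (hopt : 0 ≤ opt) (hσS : IsAssignment D S σS)
    (hlocal : kmCost D S ≤ kmCost D (insert o (S.erase c)))
    (hpure : IsPure D S σS σO ε o →
      (#(symmDiff (cluster D σS c) (cluster D σO o)) : ℝ)
        ≤ 3 * ε * min (#(cluster D σO o) : ℝ) #(cluster D σS c))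
    (hnear : ¬ IsPure D S σS σO ε o → dist o c = dS o S)
    (hquant : ¬ IsPure D S σS σO ε o → (cluster D σO o).Nonempty →
      0 ≤ a o ∧
      ε * #(cluster D σO o) ≤ #((cluster D σO o).filter fun p => dist p o ≤ a o) ∧
      (1 - ε) * #(cluster D σO o) ≤ #((cluster D σO o).filter fun p => a o ≤ dist p o))
    (hV : o ∈ V → ¬ IsPure D S σS σO ε o)
    (hcheap : ¬ (¬ IsPure D S σS σO ε o ∧ ¬ BasicCheap D S σO a opt ε o ∧ o ∉ V)) :
    ∑ p ∈ cluster D σO o, dist p c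
      ≤ 2 * ∑ p ∈ cluster D σO o, dist p o + clusterError D S V σO σS ε opt o := by
  have hb : 0 ≤ ε ^ 4 * opt / Real.log #D := by
    have := Real.log_natCast_nonneg #D
    positivity
  have hW : 0 ≤ ∑ p ∈ cluster D σO o, (dist p o + dS p S) :=
    sum_nonneg fun p _ => add_nonneg dist_nonneg (dS_nonneg p S)
  unfold clusterError
  by_cases hpo : IsPure D S σS σO ε o
  · have hVo : o ∉ V := fun h => hV h hpo
    rw [if_pos hpo, if_neg hVo, add_zero, add_zero]
    exact sum_dist_le_of_swap_optimal hσS (filter_subset _ _) hε0.le hε1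
      ((hpure hpo).trans (by gcongr; exact min_le_left _ _)) hlocal
  have hsum := sum_dist_le_of_dist_eq_dS (cluster D σO o) S (hnear hpo)
  rw [if_neg hpo]
  by_cases hVo : o ∈ V
  · have hcenter := card_mul_dS_le_sum (cluster D σO o) S o
    rw [sum_add_distrib] at hcenter
    rw [if_pos hVo]
    nlinarith
  have hbc : BasicCheap D S σO a opt ε o := by_contra fun h => hcheap ⟨hpo, h, hVo⟩
  rw [if_neg hVo, add_zero]
  rcases (cluster D σO o).eq_empty_or_nonempty with hC | hC
  · simpa [hC] using hb
  obtain ⟨ha, hnear', hfar⟩ := hquant hpo hC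
  have := card_mul_dS_le_of_basicCheap hε0 (by linarith) hopt hC ha hnear' hfar hbc
  linarith

open scoped Classical in
theorem nonexpensive_clients_two_approx_general {X : Type*} [MetricSpace X] [DecidableEq X]
    (D F : Finset X)
    (ε : ℝ) (hε0 : 0 < ε) (hε1 : ε ≤ 1 / 12)
    (OPT S : Finset X) (hOPTF : OPT ⊆ F)
    (σO σS : X → X)
    (hσO : ∀ p ∈ D, σO p ∈ OPT ∧ dist p (σO p) = dS p OPT)
    (hσS : ∀ p ∈ D, σS p ∈ S ∧ dist p (σS p) = dS p S)
    (h5 : kmCost D S ≤ 5 * kmCost D OPT)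
    (hlocal : ∀ c ∈ S, ∀ c' ∈ F, kmCost D S ≤ kmCost D (insert c' (S.erase c)))
    (t : X → X)
    (htpure : ∀ o ∈ OPT, IsPure D S σS σO ε o →
      t o ∈ S ∧ ((symmDiff (cluster D σS (t o)) (cluster D σO o)).card : ℝ)
        ≤ 3 * ε * min ((cluster D σO o).card : ℝ) ((cluster D σS (t o)).card : ℝ))
    (htnonpure : ∀ o ∈ OPT, ¬ IsPure D S σS σO ε o →
      t o ∈ S ∧ dist o (t o) = dS o S)
    (hcount : ((OPT.filter (fun o => ¬ IsPure D S σS σO ε o)).card : ℝ)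
      ≤ Real.log D.card / ε ^ 3)
    -- `a o` is an ε-quantile radius for each nonempty non-pure cluster:
    (a : X → ℝ)
    (hquant : ∀ o ∈ OPT, ¬ IsPure D S σS σO ε o → (cluster D σO o).Nonempty →
      0 ≤ a o ∧
      ε * ((cluster D σO o).card : ℝ)
        ≤ (((cluster D σO o).filter (fun p => dist p o ≤ a o)).card : ℝ) ∧
      (1 - ε) * ((cluster D σO o).card : ℝ)
        ≤ (((cluster D σO o).filter (fun p => a o ≤ dist p o)).card : ℝ))
    (V : Finset X) (hVsub : V ⊆ OPT)
    (hVnp : ∀ o ∈ V, ¬ IsPure D S σS σO ε o ∧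
      ¬ BasicCheap D S σO a (kmCost D OPT) ε o)
    (hVcost : ∑ o ∈ V, ∑ p ∈ cluster D σO o, dS p S ≤ ε ^ 2 * kmCost D OPT) :
    ∑ p ∈ D.filter (fun p => ¬ (¬ IsPure D S σS σO ε (σO p) ∧
        ¬ BasicCheap D S σO a (kmCost D OPT) ε (σO p) ∧ σO p ∉ V)),
      dist p (t (σO p))
    ≤ 2 * (∑ p ∈ D.filter (fun p => ¬ (¬ IsPure D S σS σO ε (σO p) ∧
        ¬ BasicCheap D S σO a (kmCost D OPT) ε (σO p) ∧ σO p ∉ V)),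
        dS p OPT)
      + 68 * ε * kmCost D OPT := by
  have hopt := kmCost_nonneg D OPT
  set P := fun o => ¬ (¬ IsPure D S σS σO ε o ∧ ¬ BasicCheap D S σO a (kmCost D OPT) ε o ∧ o ∉ V)
  have hmaps : ∀ p ∈ D, σO p ∈ OPT := fun p hp => (hσO p hp).1
  rw [sum_filter_eq_sum_sum_cluster hmaps P fun p o => dist p (t o),
    sum_filter_eq_sum_sum_cluster hmaps P fun p _ => dS p OPT,
    sum_congr rfl fun o _ => sum_cluster_dS_eq hσO o]
  have hcluster : ∀ o ∈ OPT.filter P, ∑ p ∈ cluster D σO o, dist p (t o)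
      ≤ 2 * ∑ p ∈ cluster D σO o, dist p o + clusterError D S V σO σS ε (kmCost D OPT) o := by
    intro o ho
    obtain ⟨hoOPT, hexp⟩ := mem_filter.1 ho
    have htS : t o ∈ S := (em (IsPure D S σS σO ε o)).elim
      (fun h => (htpure o hoOPT h).1) (fun h => (htnonpure o hoOPT h).1)
    exact sum_dist_le_two_mul_add_clusterError hε0 hε1 hopt hσS (hlocal _ htS o (hOPTF hoOPT))
      (fun h => (htpure o hoOPT h).2) (fun h => (htnonpure o hoOPT h).2) (hquant o hoOPT)
      (fun h => (hVnp o h).1) hexp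
  calc _ ≤ ∑ o ∈ OPT.filter P,
          (2 * ∑ p ∈ cluster D σO o, dist p o + clusterError D S V σO σS ε (kmCost D OPT) o) :=
        sum_le_sum hcluster
    _ ≤ 2 * ∑ o ∈ OPT.filter P, ∑ p ∈ cluster D σO o, dist p o
          + ∑ o ∈ OPT, clusterError D S V σO σS ε (kmCost D OPT) o := by
        rw [sum_add_distrib, ← mul_sum]
        gcongr
        · exact fun o _ _ => clusterError_nonneg D S V σO σS hε0.le hopt o
        · exact filter_subset P OPT
    _ ≤ _ := by
        linarith [sum_clusterError_le hσO hε0 hε1 h5 hVsub hVcost hcount,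
          mul_nonneg hε0.le hopt]

open scoped Classical in
/-- A locally optimal solution 2-approximately serves all clients outside expensive
clusters: with `t(o)` a pureness witness for pure `o` and the closest center of `S` for
non-pure `o`, and `o` expensive iff it is non-pure, non-basic-cheap and not in `V`,
`Σ_{p : σ_OPT(p) not expensive} d(p, t(σ_OPT(p)))
  ≤ 2·Σ_{p : σ_OPT(p) not expensive} d(p, OPT) + 68·ε·opt`. -/
theorem nonexpensive_clients_two_approx {X : Type*} [MetricSpace X] [DecidableEq X]
    (D F : Finset X) (hD3 : 3 ≤ D.card) (hF : F.Nonempty)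
    (ε : ℝ) (hε0 : 0 < ε) (hε1 : ε ≤ 1 / 12)
    (k : ℕ) (hk1 : 1 ≤ k) (hkF : k ≤ F.card)
    (OPT S : Finset X) (hOPTF : OPT ⊆ F) (hSF : S ⊆ F)
    (hOPTcard : OPT.card = k) (hScard : S.card = k)
    (σO σS : X → X)
    (hσO : ∀ p ∈ D, σO p ∈ OPT ∧ dist p (σO p) = dS p OPT)
    (hσS : ∀ p ∈ D, σS p ∈ S ∧ dist p (σS p) = dS p S)
    (hoptpos : 0 < kmCost D OPT)
    (h5 : kmCost D S ≤ 5 * kmCost D OPT)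
    (hlocal : ∀ c ∈ S, ∀ c' ∈ F, kmCost D S ≤ kmCost D (insert c' (S.erase c)))
    (t : X → X)
    (htpure : ∀ o ∈ OPT, IsPure D S σS σO ε o →
      t o ∈ S ∧ ((symmDiff (cluster D σS (t o)) (cluster D σO o)).card : ℝ)
        ≤ 3 * ε * min ((cluster D σO o).card : ℝ) ((cluster D σS (t o)).card : ℝ))
    (htnonpure : ∀ o ∈ OPT, ¬ IsPure D S σS σO ε o →
      t o ∈ S ∧ dist o (t o) = dS o S)
    (hcount : ((OPT.filter (fun o => ¬ IsPure D S σS σO ε o)).card : ℝ)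
      ≤ Real.log D.card / ε ^ 3)
    -- `a o` is an ε-quantile radius for each nonempty non-pure cluster:
    (a : X → ℝ)
    (hquant : ∀ o ∈ OPT, ¬ IsPure D S σS σO ε o → (cluster D σO o).Nonempty →
      0 ≤ a o ∧
      ε * ((cluster D σO o).card : ℝ)
        ≤ (((cluster D σO o).filter (fun p => dist p o ≤ a o)).card : ℝ) ∧
      (1 - ε) * ((cluster D σO o).card : ℝ)
        ≤ (((cluster D σO o).filter (fun p => a o ≤ dist p o)).card : ℝ))
    (V : Finset X) (hVsub : V ⊆ OPT)
    (hVnp : ∀ o ∈ V, ¬ IsPure D S σS σO ε o ∧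
      ¬ BasicCheap D S σO a (kmCost D OPT) ε o)
    (hVcost : ∑ o ∈ V, ∑ p ∈ cluster D σO o, dS p S ≤ ε ^ 2 * kmCost D OPT) :
    ∑ p ∈ D.filter (fun p => ¬ (¬ IsPure D S σS σO ε (σO p) ∧
        ¬ BasicCheap D S σO a (kmCost D OPT) ε (σO p) ∧ σO p ∉ V)),
      dist p (t (σO p))
    ≤ 2 * (∑ p ∈ D.filter (fun p => ¬ (¬ IsPure D S σS σO ε (σO p) ∧
        ¬ BasicCheap D S σO a (kmCost D OPT) ε (σO p) ∧ σO p ∉ V)),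
        dS p OPT)
      + 68 * ε * kmCost D OPT :=
  nonexpensive_clients_two_approx_general D F ε hε0 hε1 OPT S hOPTF σO σS hσO hσS h5 hlocal t htpure
    htnonpure hcount a hquant V hVsub hVnp hVcost
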